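/- Let G be a connected d-regular graph with d ≥ 3, n vertices, m edges, and adjacency eigenvalues λ₁,...,λₙ. If B denotes the non-backtracking matrix of G, then the characteristic polynomial of B + Bᵗ equals (x²−4)^{m−n} · ∏_{i=1}^{n} ((x−λᵢ)² − (d−2)²). -/

import Mathlib

open Polynomial Matrix
open scoped Classical

/-- Vertex type of the oriented line graph: ordered pairs of adjacent vertices. -/
abbrev OLV {V : Type*} (G : SimpleGraph V) := {p : V × V // G.Adj p.1 p.2}

/-- Arc relation of the oriented line graph: from (u,v) to (v,w) when u ≠ w. -/
def olArc {V : Type*} (G : SimpleGraph V) (a b : OLV G) : Prop :=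
  a.1.2 = b.1.1 ∧ a.1.1 ≠ b.1.2

/-- Underlying undirected graph L*(G) of the oriented line graph. -/
def Lstar {V : Type*} (G : SimpleGraph V) : SimpleGraph (OLV G) :=
  SimpleGraph.fromRel (olArc G)

/-!
Let `S`, `T` be the tail and head incidence matrices of the arcs, `τ` the arc-reversal involution
and `N = [S T]`. Then `B + Bᵀ = τ N Nᵀ - 2τ`, so `x - (B + Bᵀ) = (x + 2τ) - τ N Nᵀ`. As `τ² = 1`,
`x + 2τ` has inverse `(x - 2τ) / (x² - 4)`, and its determinant is `(x² - 4)^m` because `τ` swaps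
the two orientations of each edge. The matrix determinant lemma reduces everything to the
`2n × 2n` matrix `1 - Nᵀ (x + 2τ)⁻¹ τ N`. For a `d`-regular graph `NᵀN = [[d, A], [A, d]]` and
`Nᵀ τ N = [[A, d], [d, A]]`, so this matrix is of the form `[[P, Q], [Q, P]]`, with determinant
`det (P + Q) * det (P - Q) = det ((x + 2 - d) - A) * det ((x - 2 + d) - A) / (x² - 4)ⁿ`.
Both sides of the theorem are polynomials, so it suffices to compare them at `x ≠ ±2`.
-/

open Finset

theorem Matrix.det_fromBlocks_eq_det_add_mul_det_sub {ι R : Type*} [Fintype ι] [DecidableEq ι]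
    [CommRing R] (P Q : Matrix ι ι R) : (fromBlocks P Q Q P).det = (P + Q).det * (P - Q).det := by
  have h : fromBlocks 1 1 0 1 * fromBlocks P Q Q P * fromBlocks 1 (-1) 0 1 =
      fromBlocks (P + Q) 0 Q (P - Q) := by
    simp only [fromBlocks_multiply, Matrix.mul_neg, Matrix.mul_one, Matrix.one_mul,
      Matrix.zero_mul, Matrix.mul_zero, add_zero, zero_add]
    congr 1 <;> abel
  simpa [det_fromBlocks_zero₂₁, det_fromBlocks_zero₁₂] using congrArg det h

theorem Matrix.eval_charpoly_eq_det_smul_one_sub {ι R : Type*} [Fintype ι] [DecidableEq ι]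
    [CommRing R] (M : Matrix ι ι R) (t : R) : M.charpoly.eval t = (t • 1 - M).det := by
  rw [eval_charpoly, scalar_apply, smul_one_eq_diagonal]

theorem SimpleGraph.IsRegularOfDegree.card_le_card_edgeFinset {V : Type*} [Fintype V]
    {G : SimpleGraph V} [DecidableRel G.Adj] {d : ℕ} (hreg : G.IsRegularOfDegree d)
    (hd : 2 ≤ d) : Fintype.card V ≤ #G.edgeFinset := by
  have h := G.sum_degrees_eq_twice_card_edges
  simp only [hreg.degree_eq, Finset.sum_const, Finset.card_univ, smul_eq_mul] at h
  nlinarith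

namespace OLV

variable {V : Type*} {G : SimpleGraph V}

def rev (a : OLV G) : OLV G := ⟨(a.1.2, a.1.1), a.2.symm⟩

@[simp] lemma rev_rev (a : OLV G) : a.rev.rev = a := rfl

lemma eq_rev_iff {a b : OLV G} : b = a.rev ↔ a.1.2 = b.1.1 ∧ a.1.1 = b.1.2 := by
  constructor
  · rintro rfl; exact ⟨rfl, rfl⟩
  · rintro ⟨h₁, h₂⟩; exact Subtype.ext (Prod.ext h₁.symm h₂.symm)

variable (G)

def equivDart : OLV G ≃ G.Dart where
  toFun a := ⟨a.1, a.2⟩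
  invFun d := ⟨d.toProd, d.adj⟩

lemma card_eq_two_mul_card_edgeFinset [Fintype V] : Fintype.card (OLV G) = 2 * #G.edgeFinset := by
  rw [Fintype.card_congr (equivDart G), G.dart_card_eq_twice_card_edges]

lemma card_filter_fst_eq_degree [Fintype V] [DecidableEq V] (v : V) :
    #{a : OLV G | a.1.1 = v} = G.degree v := by
  rw [← G.dart_fst_fiber_card_eq_degree v]
  exact Finset.card_equiv (equivDart G) (by simp [equivDart])

section Orientation

variable {β : Type*} [LinearOrder β] (f : V → β)

abbrev Forward := {a : OLV G // f a.1.1 < f a.1.2}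

variable {f}

def splitEquiv (hf : Function.Injective f) : OLV G ≃ Forward G f ⊕ Forward G f where
  toFun a := if h : f a.1.1 < f a.1.2 then .inl ⟨a, h⟩
    else .inr ⟨a.rev, lt_of_le_of_ne (not_lt.1 h) (hf.ne a.2.ne')⟩
  invFun := Sum.elim Subtype.val fun e => e.1.rev
  left_inv a := by by_cases h : f a.1.1 < f a.1.2 <;> simp [h]
  right_inv
    | .inl e => by simp [e.2]
    | .inr e => by simp [rev, e.2.not_gt]

lemma splitEquiv_symm_swap (hf : Function.Injective f) (i : Forward G f ⊕ Forward G f) :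
    (splitEquiv G hf).symm i.swap = ((splitEquiv G hf).symm i).rev := by
  cases i <;> rfl

lemma card_forward [Fintype V] (hf : Function.Injective f) :
    Fintype.card (Forward G f) = #G.edgeFinset := by
  have h := card_eq_two_mul_card_edgeFinset G
  rw [Fintype.card_congr (splitEquiv G hf), Fintype.card_sum] at h
  omega

end Orientation

variable (R : Type*) [CommRing R] [DecidableEq V]

noncomputable def tailMatrix : Matrix (OLV G) V R := of fun a v => if a.1.1 = v then 1 else 0

noncomputable def headMatrix : Matrix (OLV G) V R := of fun a v => if a.1.2 = v then 1 else 0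

noncomputable def revMatrix : Matrix (OLV G) (OLV G) R := of fun a b => if b = a.rev then 1 else 0

noncomputable def nonBacktrackingMatrix : Matrix (OLV G) (OLV G) R :=
  of fun a b => if olArc G a b then 1 else 0

lemma transpose_revMatrix : (revMatrix G R)ᵀ = revMatrix G R := by
  ext a b
  simp only [revMatrix, transpose_apply, of_apply]
  congr 1
  exact propext ⟨fun h => by rw [h, rev_rev], fun h => by rw [h, rev_rev]⟩

lemma reindex_revMatrix {β : Type*} [LinearOrder β] {f : V → β} (hf : Function.Injective f) :
    reindex (splitEquiv G hf) (splitEquiv G hf) (revMatrix G R) = fromBlocks 0 1 1 0 := by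
  ext i j
  simp only [reindex_apply, submatrix_apply, revMatrix, of_apply, ← splitEquiv_symm_swap,
    (splitEquiv G hf).symm.injective.eq_iff]
  rcases i with i | i <;> rcases j with j | j <;> simp [one_apply, eq_comm]

variable {G R} [Fintype V]

lemma revMatrix_mul_apply {ι : Type*} (M : Matrix (OLV G) ι R) (a : OLV G) (i : ι) :
    (revMatrix G R * M) a i = M a.rev i := by
  simp [revMatrix, mul_apply]

variable (G R)

lemma revMatrix_mul_self : revMatrix G R * revMatrix G R = 1 := by
  ext a b
  rw [revMatrix_mul_apply]
  simp [revMatrix, one_apply, eq_comm]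

lemma det_smul_one_add_smul_revMatrix (x y : R) :
    (x • 1 + y • revMatrix G R).det = (x ^ 2 - y ^ 2) ^ #G.edgeFinset := by
  have hf := (Fintype.equivFin V).injective
  rw [← det_reindex_self (splitEquiv G hf)]
  have hsplit : reindex (splitEquiv G hf) (splitEquiv G hf) (x • 1 + y • revMatrix G R) =
      fromBlocks (x • 1) (y • 1) (y • 1) (x • 1) := by
    rw [← coe_reindexAlgEquiv R R, map_add, map_smul, map_smul, map_one, coe_reindexAlgEquiv,
      reindex_revMatrix, ← fromBlocks_one, fromBlocks_smul, fromBlocks_smul, fromBlocks_add]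
    simp
  rw [hsplit, det_fromBlocks_eq_det_add_mul_det_sub, ← add_smul, ← sub_smul, det_smul, det_smul,
    det_one, mul_one, mul_one, card_forward G hf, ← mul_pow]
  ring

lemma revMatrix_mul_tailMatrix : revMatrix G R * tailMatrix G R = headMatrix G R := by
  ext a v
  rw [revMatrix_mul_apply]
  rfl

lemma revMatrix_mul_headMatrix : revMatrix G R * headMatrix G R = tailMatrix G R := by
  rw [← revMatrix_mul_tailMatrix, ← Matrix.mul_assoc, revMatrix_mul_self, Matrix.one_mul]

lemma tailMatrix_transpose_mul_headMatrix :
    (tailMatrix G R)ᵀ * headMatrix G R = G.adjMatrix R := by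
  ext v w
  simp only [tailMatrix, headMatrix, mul_apply, transpose_apply, of_apply, mul_boole,
    ← ite_and, SimpleGraph.adjMatrix_apply]
  by_cases hvw : G.Adj v w
  · have key (a : OLV G) : (a.1.2 = w ∧ a.1.1 = v) ↔ a = ⟨(v, w), hvw⟩ := by
      rw [Subtype.ext_iff, Prod.ext_iff]
      tauto
    simp only [key, Finset.sum_ite_eq', Finset.mem_univ, if_true, hvw]
  · rw [if_neg hvw]
    refine Finset.sum_eq_zero fun a _ => if_neg ?_
    rintro ⟨rfl, rfl⟩
    exact hvw a.2

lemma headMatrix_transpose_mul_tailMatrix :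
    (headMatrix G R)ᵀ * tailMatrix G R = G.adjMatrix R := by
  rw [← transpose_transpose (tailMatrix G R), ← transpose_mul,
    tailMatrix_transpose_mul_headMatrix, SimpleGraph.transpose_adjMatrix]

lemma tailMatrix_transpose_mul_self {d : ℕ} (hreg : G.IsRegularOfDegree d) :
    (tailMatrix G R)ᵀ * tailMatrix G R = (d : R) • 1 := by
  ext v w
  simp only [tailMatrix, mul_apply, transpose_apply, of_apply, ← ite_and,
    Matrix.smul_apply, one_apply, smul_eq_mul, mul_ite, mul_one, mul_zero]
  rcases eq_or_ne v w with rfl | hvw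
  · simp only [and_self, if_true, Finset.sum_boole, card_filter_fst_eq_degree, hreg.degree_eq]
  · rw [if_neg hvw]
    refine Finset.sum_eq_zero fun a _ => if_neg ?_
    rintro ⟨rfl, rfl⟩
    exact hvw rfl

lemma headMatrix_transpose_mul_self {d : ℕ} (hreg : G.IsRegularOfDegree d) :
    (headMatrix G R)ᵀ * headMatrix G R = (d : R) • 1 := by
  rw [← revMatrix_mul_tailMatrix, transpose_mul, transpose_revMatrix, Matrix.mul_assoc,
    ← Matrix.mul_assoc (revMatrix G R), revMatrix_mul_self, Matrix.one_mul,
    tailMatrix_transpose_mul_self G R hreg]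

noncomputable def incidenceMatrix : Matrix (OLV G) (V ⊕ V) R :=
  fromCols (tailMatrix G R) (headMatrix G R)

lemma revMatrix_mul_incidenceMatrix :
    revMatrix G R * incidenceMatrix G R = fromCols (headMatrix G R) (tailMatrix G R) := by
  rw [incidenceMatrix, mul_fromCols, revMatrix_mul_tailMatrix, revMatrix_mul_headMatrix]

lemma incidenceMatrix_transpose_mul_self {d : ℕ} (hreg : G.IsRegularOfDegree d) :
    (incidenceMatrix G R)ᵀ * incidenceMatrix G R =
      fromBlocks ((d : R) • 1) (G.adjMatrix R) (G.adjMatrix R) ((d : R) • 1) := by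
  rw [incidenceMatrix, transpose_fromCols, fromRows_mul_fromCols,
    tailMatrix_transpose_mul_self G R hreg, tailMatrix_transpose_mul_headMatrix,
    headMatrix_transpose_mul_tailMatrix, headMatrix_transpose_mul_self G R hreg]

lemma incidenceMatrix_transpose_mul_revMatrix_mul_self {d : ℕ} (hreg : G.IsRegularOfDegree d) :
    (incidenceMatrix G R)ᵀ * revMatrix G R * incidenceMatrix G R =
      fromBlocks (G.adjMatrix R) ((d : R) • 1) ((d : R) • 1) (G.adjMatrix R) := by
  rw [Matrix.mul_assoc, revMatrix_mul_incidenceMatrix, incidenceMatrix, transpose_fromCols,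
    fromRows_mul_fromCols, tailMatrix_transpose_mul_self G R hreg,
    tailMatrix_transpose_mul_headMatrix, headMatrix_transpose_mul_tailMatrix,
    headMatrix_transpose_mul_self G R hreg]

variable {G R} in
lemma headMatrix_mul_tailMatrix_transpose_apply (a b : OLV G) :
    (headMatrix G R * (tailMatrix G R)ᵀ) a b = if a.1.2 = b.1.1 then 1 else 0 := by
  simp [headMatrix, tailMatrix, mul_apply, eq_comm]

variable {G R} in
lemma tailMatrix_mul_headMatrix_transpose_apply (a b : OLV G) :
    (tailMatrix G R * (headMatrix G R)ᵀ) a b = if a.1.1 = b.1.2 then 1 else 0 := by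
  simp [headMatrix, tailMatrix, mul_apply, eq_comm]

lemma nonBacktrackingMatrix_add_transpose :
    nonBacktrackingMatrix G R + (nonBacktrackingMatrix G R)ᵀ =
      revMatrix G R * incidenceMatrix G R * (incidenceMatrix G R)ᵀ - (2 : R) • revMatrix G R := by
  rw [revMatrix_mul_incidenceMatrix, incidenceMatrix, transpose_fromCols, fromCols_mul_fromRows]
  ext a b
  simp only [Matrix.add_apply, Matrix.sub_apply, Matrix.smul_apply, transpose_apply,
    headMatrix_mul_tailMatrix_transpose_apply, tailMatrix_mul_headMatrix_transpose_apply,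
    nonBacktrackingMatrix, revMatrix, of_apply, eq_rev_iff, olArc, smul_eq_mul,
    eq_comm (a := b.1.2), ne_comm (a := b.1.1)]
  by_cases h₁ : a.1.2 = b.1.1 <;> by_cases h₂ : a.1.1 = b.1.2 <;> simp [h₁, h₂, one_add_one_eq_two]

lemma det_smul_one_sub_nonBacktrackingMatrix_add_transpose {F : Type*} [Field F] {d : ℕ}
    (hreg : G.IsRegularOfDegree d) {x : F} (hxp : x + 2 ≠ 0) (hxm : x - 2 ≠ 0) :
    (x ^ 2 - 4) ^ Fintype.card V *
        (x • 1 - (nonBacktrackingMatrix G F + (nonBacktrackingMatrix G F)ᵀ)).det =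
      (x ^ 2 - 4) ^ #G.edgeFinset * ((x + 2 - d) • 1 - G.adjMatrix F).det *
        ((x - 2 + d) • 1 - G.adjMatrix F).det := by
  rw [nonBacktrackingMatrix_add_transpose]
  set N := incidenceMatrix G F
  set τ := revMatrix G F
  set A := G.adjMatrix F
  set D : Matrix V V F := (d : F) • 1
  have hx : x ^ 2 - 4 = (x + 2) * (x - 2) := by ring
  have hx4 : x ^ 2 - 4 ≠ 0 := hx ▸ mul_ne_zero hxp hxm
  have hK : (x • 1 + (2 : F) • τ).det = (x ^ 2 - 4) ^ #G.edgeFinset := by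
    rw [det_smul_one_add_smul_revMatrix]
    norm_num
  have hKinv : (x • 1 + (2 : F) • τ)⁻¹ = (x ^ 2 - 4)⁻¹ • (x • 1 - (2 : F) • τ) := by
    refine inv_eq_right_inv ?_
    rw [Matrix.mul_smul, add_mul, mul_sub, mul_sub, smul_mul_smul, smul_mul_smul, smul_mul_smul,
      smul_mul_smul, revMatrix_mul_self, Matrix.one_mul, Matrix.mul_one, Matrix.one_mul]
    match_scalars <;> field_simp <;> ring
  have hsplit : x • 1 - (τ * N * Nᵀ - (2 : F) • τ) = (x • 1 + (2 : F) • τ) + (τ * N) * (-Nᵀ) := by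
    rw [Matrix.mul_neg]
    abel
  have hconj : Nᵀ * (x • 1 - (2 : F) • τ) * (τ * N) = x • (Nᵀ * τ * N) - (2 : F) • (Nᵀ * N) := by
    rw [← Matrix.mul_assoc, Matrix.mul_assoc Nᵀ, Matrix.sub_mul, Matrix.smul_mul, Matrix.smul_mul,
      revMatrix_mul_self, Matrix.one_mul]
    simp only [Matrix.mul_sub, Matrix.sub_mul, Matrix.mul_smul, Matrix.smul_mul, Matrix.mul_one,
      Matrix.mul_assoc]
  have hblocks : 1 + -Nᵀ * (x • 1 + (2 : F) • τ)⁻¹ * (τ * N) =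
      fromBlocks (1 - (x ^ 2 - 4)⁻¹ • (x • A - (2 : F) • D))
        (-(x ^ 2 - 4)⁻¹ • (x • D - (2 : F) • A))
        (-(x ^ 2 - 4)⁻¹ • (x • D - (2 : F) • A))
        (1 - (x ^ 2 - 4)⁻¹ • (x • A - (2 : F) • D)) := by
    simp only [hKinv, Matrix.mul_smul, Matrix.smul_mul, Matrix.neg_mul]
    rw [hconj, incidenceMatrix_transpose_mul_revMatrix_mul_self G F hreg,
      incidenceMatrix_transpose_mul_self G F hreg, ← fromBlocks_one]
    simp only [sub_eq_add_neg, fromBlocks_smul, fromBlocks_neg, fromBlocks_add]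
    congr 1 <;> module
  have hplus : 1 - (x ^ 2 - 4)⁻¹ • (x • A - (2 : F) • D) + -(x ^ 2 - 4)⁻¹ • (x • D - (2 : F) • A)
      = (x + 2)⁻¹ • ((x + 2 - d) • 1 - A) := by
    match_scalars <;> field_simp <;> ring
  have hminus : 1 - (x ^ 2 - 4)⁻¹ • (x • A - (2 : F) • D) - -(x ^ 2 - 4)⁻¹ • (x • D - (2 : F) • A)
      = (x - 2)⁻¹ • ((x - 2 + d) • 1 - A) := by
    match_scalars <;> field_simp <;> ring
  rw [hsplit, det_add_mul _ _ (by rw [hK]; exact (pow_ne_zero _ hx4).isUnit), hblocks,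
    det_fromBlocks_eq_det_add_mul_det_sub, hK, hplus, hminus, det_smul, det_smul, inv_pow, inv_pow,
    hx, mul_pow]
  field_simp

end OLV

theorem stmt_5_general {V : Type*} [Fintype V] [DecidableEq V] (G : SimpleGraph V)
    (d n m : ℕ) (hd : 3 ≤ d) (hreg : G.IsRegularOfDegree d)
    (hn : Fintype.card V = n) (hm : G.edgeFinset.card = m)
    (lam : Fin n → ℝ)
    (hchar : (G.adjMatrix ℝ).charpoly = ∏ i, (X - C (lam i)))
    (B : Matrix (OLV G) (OLV G) ℝ)
    (hB : B = Matrix.of fun a b => if olArc G a b then (1 : ℝ) else 0) :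
    (B + Bᵀ).charpoly =
      (X ^ 2 - 4) ^ (m - n) *
        ∏ i, ((X - C (lam i)) ^ 2 - C ((d : ℝ) - 2) ^ 2) := by
  obtain rfl : B = OLV.nonBacktrackingMatrix G ℝ := hB
  have hnm : n ≤ m := hn ▸ hm ▸ hreg.card_le_card_edgeFinset (by omega)
  refine eq_of_infinite_eval_eq _ _ ((Set.toFinite {-2, 2}).infinite_compl.mono fun x hx => ?_)
  simp only [Set.mem_compl_iff, Set.mem_insert_iff, Set.mem_singleton_iff, not_or] at hx
  have hxp : x + 2 ≠ 0 := fun h => hx.1 (by linarith)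
  have hxm : x - 2 ≠ 0 := fun h => hx.2 (by linarith)
  have key := OLV.det_smul_one_sub_nonBacktrackingMatrix_add_transpose G hreg hxp hxm
  simp only [← eval_charpoly_eq_det_smul_one_sub, hchar, hn, hm, eval_prod, eval_sub, eval_X,
    eval_C] at key
  have hx4 : x ^ 2 - 4 ≠ 0 := by
    convert mul_ne_zero hxp hxm using 1
    ring
  refine mul_left_cancel₀ (pow_ne_zero n hx4) (key.trans ?_)
  simp only [eval_mul, eval_pow, eval_sub, eval_X, eval_prod, eval_C, eval_ofNat]
  rw [mul_assoc, ← prod_mul_distrib, ← mul_assoc, ← pow_add, Nat.add_sub_cancel' hnm]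
  congr 1
  exact prod_congr rfl fun i _ => by ring

theorem stmt_5 {V : Type*} [Fintype V] [DecidableEq V] (G : SimpleGraph V)
    (d n m : ℕ) (hd : 3 ≤ d) (hreg : G.IsRegularOfDegree d) (hconn : G.Connected)
    (hn : Fintype.card V = n) (hm : G.edgeFinset.card = m)
    (lam : Fin n → ℝ)
    (hchar : (G.adjMatrix ℝ).charpoly = ∏ i, (X - C (lam i)))
    (B : Matrix (OLV G) (OLV G) ℝ)
    (hB : B = Matrix.of fun a b => if olArc G a b then (1 : ℝ) else 0) :
    (B + Bᵀ).charpoly =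
      (X ^ 2 - 4) ^ (m - n) *
        ∏ i, ((X - C (lam i)) ^ 2 - C ((d : ℝ) - 2) ^ 2) :=
  stmt_5_general G d n m hd hreg hn hm lam hchar B hB
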